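/- arXiv:2210.11148 — 3 statements merged into one kernel-verified Lean document; each statement's English description precedes it below -/
import Mathlib

section
/- Let H be an abelian group and let ℓ : H → ℝ be a nonnegative function satisfying ℓ(h^m) = |m|·ℓ(h) for all h ∈ H and m ∈ ℤ, and ℓ(gh) ≤ ℓ(g) + ℓ(h) for all g, h ∈ H. Then there exists a seminorm ν on the ℚ-vector space H ⊗ ℚ (i.e. ν : H ⊗ ℚ → ℝ with ν(qv) = |q|·ν(v) for q ∈ ℚ and ν(v+w) ≤ ν(v)+ν(w)) such that ν(p(h)) = ℓ(h) for every h ∈ H, where p : H → H ⊗ ℚ is the natural map h ↦ h ⊗ 1. -/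
open scoped TensorProduct

/-!
Every element of `ℚ ⊗[ℤ] H` is a fraction `h / s` with `h ∈ H` and `s ∈ ℤ ∖ {0}`; put
`ν (h / s) = ℓ h / |s|`. This is well defined because `h / s = g / t` means `u • t • h = u • s • g`
for some nonzero `u`, and homogeneity of `ℓ` turns this into `|u| |t| ℓ h = |u| |s| ℓ g`.
Homogeneity and subadditivity of `ν` follow from those of `ℓ` after clearing denominators.
-/

open IsLocalizedModule

section

variable {H : Type*} [AddCommGroup H] {ℓ : H → ℝ}

local notation "p" => TensorProduct.mk ℤ ℚ H 1

theorem div_abs_eq_of_mk'_eq (hhom : ∀ (h : H) (m : ℤ), ℓ (m • h) = |(m : ℝ)| * ℓ h)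
    {g h : H} {s t : nonZeroDivisors ℤ} (e : mk' p g s = mk' p h t) :
    ℓ g / |((s : ℤ) : ℝ)| = ℓ h / |((t : ℤ) : ℝ)| := by
  obtain ⟨u, hu⟩ := (mk'_eq_mk'_iff p g h s t).mp e
  have key : |((u : ℤ) : ℝ)| * (|((s : ℤ) : ℝ)| * ℓ h) =
      |((u : ℤ) : ℝ)| * (|((t : ℤ) : ℝ)| * ℓ g) := by
    simp only [Submonoid.smul_def] at hu
    rw [← hhom, ← hhom, ← hhom, ← hhom, hu]
  have hu0 : |((u : ℤ) : ℝ)| ≠ 0 := by simp [nonZeroDivisors.coe_ne_zero u]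
  have hs0 : |((s : ℤ) : ℝ)| ≠ 0 := by simp [nonZeroDivisors.coe_ne_zero s]
  have ht0 : |((t : ℤ) : ℝ)| ≠ 0 := by simp [nonZeroDivisors.coe_ne_zero t]
  rw [div_eq_div_iff hs0 ht0]
  linarith [mul_left_cancel₀ hu0 key]

variable (ℓ) in
noncomputable def rationalizedLength (v : ℚ ⊗[ℤ] H) : ℝ :=
  let x := (mk'_surjective (nonZeroDivisors ℤ) p v).choose
  ℓ x.1 / |((x.2 : ℤ) : ℝ)|

theorem rationalizedLength_mk' (hhom : ∀ (h : H) (m : ℤ), ℓ (m • h) = |(m : ℝ)| * ℓ h)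
    (h : H) (s : nonZeroDivisors ℤ) :
    rationalizedLength ℓ (mk' p h s) = ℓ h / |((s : ℤ) : ℝ)| :=
  div_abs_eq_of_mk'_eq hhom (mk'_surjective (nonZeroDivisors ℤ) p (mk' p h s)).choose_spec

theorem rationalizedLength_one_tmul (hhom : ∀ (h : H) (m : ℤ), ℓ (m • h) = |(m : ℝ)| * ℓ h)
    (h : H) : rationalizedLength ℓ ((1 : ℚ) ⊗ₜ[ℤ] h) = ℓ h := by
  rw [← TensorProduct.mk_apply, ← mk'_one (nonZeroDivisors ℤ) p h, rationalizedLength_mk' hhom]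
  simp

theorem rationalizedLength_add_le (hhom : ∀ (h : H) (m : ℤ), ℓ (m • h) = |(m : ℝ)| * ℓ h)
    (hsub : ∀ g h : H, ℓ (g + h) ≤ ℓ g + ℓ h) (v w : ℚ ⊗[ℤ] H) :
    rationalizedLength ℓ (v + w) ≤ rationalizedLength ℓ v + rationalizedLength ℓ w := by
  obtain ⟨⟨g, s⟩, rfl⟩ := mk'_surjective (nonZeroDivisors ℤ) p v
  obtain ⟨⟨h, t⟩, rfl⟩ := mk'_surjective (nonZeroDivisors ℤ) p w
  simp only [Function.uncurry_apply_pair]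
  have hs : 0 < |((s : ℤ) : ℝ)| := by simp [nonZeroDivisors.coe_ne_zero s]
  have ht : 0 < |((t : ℤ) : ℝ)| := by simp [nonZeroDivisors.coe_ne_zero t]
  have hle := hsub (t • g) (s • h)
  simp only [Submonoid.smul_def, hhom] at hle
  rw [mk'_add_mk', rationalizedLength_mk' hhom, rationalizedLength_mk' hhom,
    rationalizedLength_mk' hhom, Submonoid.smul_def, Submonoid.smul_def, Submonoid.coe_mul,
    Int.cast_mul, abs_mul, div_add_div _ _ hs.ne' ht.ne',
    div_le_div_iff_of_pos_right (mul_pos hs ht)]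
  linarith

theorem rationalizedLength_smul (hhom : ∀ (h : H) (m : ℤ), ℓ (m • h) = |(m : ℝ)| * ℓ h)
    (q : ℚ) (v : ℚ ⊗[ℤ] H) :
    rationalizedLength ℓ (q • v) = |(q : ℝ)| * rationalizedLength ℓ v := by
  obtain ⟨⟨h, s⟩, rfl⟩ := mk'_surjective (nonZeroDivisors ℤ) p v
  obtain ⟨⟨a, b⟩, rfl⟩ := IsLocalization.mk'_surjective (nonZeroDivisors ℤ) (S := ℚ) q
  simp only [Function.uncurry_apply_pair]
  rw [mk'_smul_mk', rationalizedLength_mk' hhom, rationalizedLength_mk' hhom, hhom,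
    IsFractionRing.mk'_eq_div, algebraMap_int_eq, eq_intCast, eq_intCast]
  push_cast
  rw [abs_mul, abs_div]
  ring

variable (ℓ) in
noncomputable def rationalizedSeminorm (hhom : ∀ (h : H) (m : ℤ), ℓ (m • h) = |(m : ℝ)| * ℓ h)
    (hsub : ∀ g h : H, ℓ (g + h) ≤ ℓ g + ℓ h) : Seminorm ℚ (ℚ ⊗[ℤ] H) :=
  Seminorm.of (rationalizedLength ℓ) (rationalizedLength_add_le hhom hsub)
    (rationalizedLength_smul hhom)

end

theorem seminorm_on_rationalization_general
    {H : Type*} [AddCommGroup H] (ℓ : H → ℝ)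
    (hhom : ∀ (h : H) (m : ℤ), ℓ (m • h) = |(m : ℝ)| * ℓ h)
    (hsub : ∀ g h : H, ℓ (g + h) ≤ ℓ g + ℓ h) :
    ∃ ν : ℚ ⊗[ℤ] H → ℝ,
      (∀ (q : ℚ) (v : ℚ ⊗[ℤ] H), ν (q • v) = |(q : ℝ)| * ν v) ∧
      (∀ v w : ℚ ⊗[ℤ] H, ν (v + w) ≤ ν v + ν w) ∧
      (∀ h : H, ν ((1 : ℚ) ⊗ₜ[ℤ] h) = ℓ h) :=
  let ν := rationalizedSeminorm ℓ hhom hsub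
  ⟨ν, fun q v => by rw [map_smul_eq_mul, ← Rat.norm_cast_real, Real.norm_eq_abs],
    map_add_le_add ν, rationalizedLength_one_tmul hhom⟩

/-- A nonnegative, homogeneous, subadditive function `ℓ` on an abelian group `H` induces a
seminorm `ν` on the `ℚ`-vector space `ℚ ⊗[ℤ] H` such that `ν (p h) = ℓ h` for the natural
map `p : H → ℚ ⊗[ℤ] H`, `h ↦ 1 ⊗ h`. -/
theorem seminorm_on_rationalization
    {H : Type*} [AddCommGroup H] (ℓ : H → ℝ)
    (hnn : ∀ h : H, 0 ≤ ℓ h)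
    (hhom : ∀ (h : H) (m : ℤ), ℓ (m • h) = |(m : ℝ)| * ℓ h)
    (hsub : ∀ g h : H, ℓ (g + h) ≤ ℓ g + ℓ h) :
    ∃ ν : ℚ ⊗[ℤ] H → ℝ,
      (∀ (q : ℚ) (v : ℚ ⊗[ℤ] H), ν (q • v) = |(q : ℝ)| * ν v) ∧
      (∀ v w : ℚ ⊗[ℤ] H, ν (v + w) ≤ ν v + ν w) ∧
      (∀ h : H, ν ((1 : ℚ) ⊗ₜ[ℤ] h) = ℓ h) :=
  seminorm_on_rationalization_general ℓ hhom hsub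
end

section
/- Let H be an abelian group whose torsion-free rank n := dim_ℚ(H ⊗ ℚ) is finite, and let ℓ : H → ℝ be a nonnegative function satisfying ℓ(h^m) = |m|·ℓ(h) for all h ∈ H and m ∈ ℤ, and ℓ(gh) ≤ ℓ(g) + ℓ(h) for all g, h ∈ H. Suppose there exists ε > 0 such that ℓ(h) ≥ ε for every element h ∈ H of infinite order. Then the image of the natural map p : H → H ⊗ ℚ is a free abelian group of rank n, i.e. p(H) ≅ ℤ^n. -/
open scoped TensorProduct

/-! Pick `b i ∈ H` whose images form a `ℚ`-basis of `ℚ ⊗ H`. Clearing denominators, and using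
that `ℓ` vanishes on torsion, gives `ℓ h ≤ ‖x‖ * ∑ i, ℓ (b i)`, where `x ∈ ℚⁿ ⊆ ℝⁿ` are the
coordinates of `1 ⊗ h`. Hence in these coordinates the image of `H` is a subgroup of `ℝⁿ` whose
nonzero elements have sup norm at least `ε / (∑ i, ℓ (b i) + 1)`: it is discrete, and it spans
`ℝⁿ` since it contains the standard basis, so it is a full lattice, free of rank `n`. -/

section Rationalization

variable {H : Type*} [AddCommGroup H]

theorem tmul_one_eq_zero_iff_isOfFinAddOrder (h : H) :
    (1 : ℚ) ⊗ₜ[ℤ] h = 0 ↔ IsOfFinAddOrder h := by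
  rw [← TensorProduct.mk_apply (R := ℤ) (M := ℚ) (N := H) 1,
    IsLocalizedModule.eq_zero_iff (nonZeroDivisors ℤ), isOfFinAddOrder_iff_zsmul_eq_zero]
  constructor
  · rintro ⟨s, hs⟩
    exact ⟨s, nonZeroDivisors.ne_zero s.2, hs⟩
  · rintro ⟨m, hm, hmh⟩
    exact ⟨⟨m, mem_nonZeroDivisors_of_ne_zero hm⟩, hmh⟩

theorem span_range_mk_one : Submodule.span ℚ (Set.range (TensorProduct.mk ℤ ℚ H 1)) = ⊤ := by
  simpa [Submodule.baseChange_eq_span, LinearMap.coe_range] using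
    Submodule.baseChange_top (R := ℤ) (M := H) ℚ

end Rationalization

namespace Seminorm

variable {H : Type*} [AddCommGroup H] (p : Seminorm ℤ H)

theorem eq_zero_of_isOfFinAddOrder {h : H} (hh : IsOfFinAddOrder h) : p h = 0 := by
  obtain ⟨m, hm, hmh⟩ := isOfFinAddOrder_iff_zsmul_eq_zero.mp hh
  have : ‖m‖ * p h = 0 := by rw [← map_smul_eq_mul, hmh, map_zero]
  exact (mul_eq_zero.mp this).resolve_left (norm_ne_zero_iff.mpr hm)

theorem le_sum_abs_repr_mul {V ι : Type*} [AddCommGroup V] [Module ℚ V] [Fintype ι]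
    (f : H →+ V) (hker : ∀ h, f h = 0 → p h = 0) (B : Module.Basis ι ℚ V) (b : ι → H)
    (hb : ∀ i, f (b i) = B i) (h : H) :
    p h ≤ ∑ i, |(B.repr (f h) i : ℝ)| * p (b i) := by
  set q := B.repr (f h)
  obtain ⟨⟨d, hd⟩, hint⟩ :=
    IsLocalization.exist_integer_multiples (nonZeroDivisors ℤ) Finset.univ (fun i ↦ q i)
  choose a ha using fun i ↦ hint i (Finset.mem_univ i)
  have ha' : ∀ i, (a i : ℚ) = d * q i := fun i ↦ by simpa using ha i
  -- `d • h` and `∑ i, a i • b i` have the same image, so they differ by an element of `ker f`.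
  have hrel : f (d • h - ∑ i, a i • b i) = 0 := by
    rw [map_sub, map_sum, sub_eq_zero, map_zsmul, ← B.sum_repr (f h), Finset.smul_sum]
    refine Finset.sum_congr rfl fun i _ ↦ ?_
    rw [map_zsmul, hb, ← Int.cast_smul_eq_zsmul ℚ, ← Int.cast_smul_eq_zsmul ℚ, smul_smul, ha']
  have hnorm : ∀ i, ‖a i‖ = ‖d‖ * |(q i : ℝ)| := fun i ↦ by
    rw [Int.norm_eq_abs, Int.norm_eq_abs, ← abs_mul]
    exact_mod_cast congrArg (fun x : ℚ ↦ |x|) (ha' i)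
  have key : ‖d‖ * p h ≤ ‖d‖ * ∑ i, |(q i : ℝ)| * p (b i) := calc
    ‖d‖ * p h = p (d • h) := (map_smul_eq_mul p d h).symm
    _ ≤ p (d • h - ∑ i, a i • b i) + p (∑ i, a i • b i) := by
      simpa using map_add_le_add p (d • h - ∑ i, a i • b i) (∑ i, a i • b i)
    _ = p (∑ i, a i • b i) := by rw [hker _ hrel, zero_add]
    _ ≤ ∑ i, p (a i • b i) :=
      Finset.le_sum_of_subadditive p (map_zero p).le (map_add_le_add p) _ _
    _ = ‖d‖ * ∑ i, |(q i : ℝ)| * p (b i) := by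
      simp only [map_smul_eq_mul, hnorm, Finset.mul_sum, mul_assoc]
  exact le_of_mul_le_mul_left key (norm_pos_iff.mpr (nonZeroDivisors.ne_zero hd))

end Seminorm

theorem AddSubgroup.nonempty_addEquiv_fin_finrank_of_le_norm {E : Type*} [NormedAddCommGroup E]
    [NormedSpace ℝ E] [FiniteDimensional ℝ E] (L : AddSubgroup E)
    (hspan : Submodule.span ℝ (L : Set E) = ⊤) {δ : ℝ} (hδ : 0 < δ)
    (hsep : ∀ x ∈ L, x ≠ 0 → δ ≤ ‖x‖) : Nonempty (L ≃+ (Fin (Module.finrank ℝ E) → ℤ)) := by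
  let M := AddSubgroup.toIntSubmodule L
  have : DiscreteTopology M := .of_forall_le_dist hδ fun x y hxy ↦ by
    simp only [dist_eq_norm]
    exact hsep _ (sub_mem x.2 y.2) (sub_ne_zero.mpr (Subtype.coe_injective.ne hxy))
  have : IsZLattice ℝ M := ⟨hspan⟩
  exact ⟨(Module.finBasisOfFinrankEq ℤ M (ZLattice.rank ℝ M)).equivFun.toAddEquiv⟩

namespace Module.Basis

variable {ι V : Type*} [Fintype ι] [AddCommGroup V] [Module ℚ V] (B : Basis ι ℚ V)

noncomputable def realRepr : V →+ (ι → ℝ) :=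
  ((Rat.castHom ℝ).toAddMonoidHom.compLeft ι).comp B.equivFun.toLinearMap.toAddMonoidHom

theorem realRepr_apply (v : V) (i : ι) : B.realRepr v i = B.repr v i := rfl

theorem realRepr_injective : Function.Injective B.realRepr :=
  fun v w hvw ↦ B.repr.injective <| Finsupp.ext fun i ↦ by
    have := congrFun hvw i
    rwa [realRepr_apply, realRepr_apply, Rat.cast_inj] at this

theorem realRepr_self (i : ι) : B.realRepr (B i) = Pi.basisFun ℝ ι i := by
  classical
  ext j
  rw [realRepr_apply, B.repr_self, Pi.basisFun_apply, Finsupp.single_apply, Pi.single_apply]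
  split_ifs <;> simp_all [eq_comm]

theorem abs_repr_le_norm_realRepr (v : V) (i : ι) : |(B.repr v i : ℝ)| ≤ ‖B.realRepr v‖ :=
  norm_le_pi_norm (B.realRepr v) i

end Module.Basis

theorem AddMonoidHom.nonempty_range_addEquiv_fin_finrank {H V : Type*} [AddCommGroup H]
    [AddCommGroup V] [Module ℚ V] [FiniteDimensional ℚ V] (f : H →+ V)
    (hspan : Submodule.span ℚ (Set.range f) = ⊤) (p : Seminorm ℤ H)
    (hker : ∀ h, f h = 0 → p h = 0) {ε : ℝ} (hε : 0 < ε) (hbound : ∀ h, f h ≠ 0 → ε ≤ p h) :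
    Nonempty (f.range ≃+ (Fin (Module.finrank ℚ V) → ℤ)) := by
  obtain ⟨ι, b, -, hbspan, hbli⟩ := exists_linearIndependent' ℚ f
  let B : Module.Basis ι ℚ V := .mk hbli (by rw [hbspan, hspan])
  have hB : ∀ i, f (b i) = B i := fun i ↦ by simp [B]
  have : Fintype ι := FiniteDimensional.fintypeBasisIndex B
  let C := ∑ i, p (b i)
  have hsep : ∀ x ∈ f.range.map B.realRepr, x ≠ 0 → ε / (C + 1) ≤ ‖x‖ := by
    rintro - ⟨-, ⟨h, rfl⟩, rfl⟩ hx
    have hC : 0 ≤ C := Finset.sum_nonneg fun i _ ↦ apply_nonneg p (b i)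
    have : ε ≤ ‖B.realRepr (f h)‖ * C := calc
      ε ≤ p h := hbound h fun hh ↦ hx (by rw [hh, map_zero])
      _ ≤ ∑ i, |(B.repr (f h) i : ℝ)| * p (b i) := p.le_sum_abs_repr_mul f hker B b hB h
      _ ≤ ‖B.realRepr (f h)‖ * C := by
        rw [Finset.mul_sum]
        gcongr with i
        exact B.abs_repr_le_norm_realRepr (f h) i
    rw [div_le_iff₀ (by positivity)]
    exact this.trans (mul_le_mul_of_nonneg_left (by linarith) (norm_nonneg _))
  have hspan' : Submodule.span ℝ (f.range.map B.realRepr : Set (ι → ℝ)) = ⊤ := by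
    rw [eq_top_iff, ← (Pi.basisFun ℝ ι).span_eq, Submodule.span_le]
    rintro - ⟨i, rfl⟩
    exact Submodule.subset_span ⟨f (b i), ⟨b i, rfl⟩, by rw [hB, B.realRepr_self]⟩
  obtain ⟨e⟩ := (f.range.map B.realRepr).nonempty_addEquiv_fin_finrank_of_le_norm hspan'
    (by positivity) hsep
  rw [Module.finrank_eq_card_basis B, ← Module.finrank_fintype_fun_eq_card ℝ]
  exact ⟨(AddSubgroup.equivMapOfInjective _ _ B.realRepr_injective).trans e⟩

theorem image_in_rationalization_is_free_general
    {H : Type*} [AddCommGroup H]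
    [FiniteDimensional ℚ (ℚ ⊗[ℤ] H)]
    (n : ℕ) (hn : n = Module.finrank ℚ (ℚ ⊗[ℤ] H))
    (ℓ : H → ℝ)
    (hhom : ∀ (h : H) (m : ℤ), ℓ (m • h) = |(m : ℝ)| * ℓ h)
    (hsub : ∀ g h : H, ℓ (g + h) ≤ ℓ g + ℓ h)
    (ε : ℝ) (hε : 0 < ε)
    (hbound : ∀ h : H, ¬ IsOfFinAddOrder h → ε ≤ ℓ h) :
    Nonempty ((TensorProduct.mk ℤ ℚ H 1).toAddMonoidHom.range ≃+ (Fin n → ℤ)) := by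
  let p : Seminorm ℤ H := .of ℓ hsub fun m h ↦ by rw [hhom, Int.norm_eq_abs]
  subst hn
  exact (TensorProduct.mk ℤ ℚ H 1).toAddMonoidHom.nonempty_range_addEquiv_fin_finrank
    span_range_mk_one p
    (fun h hh ↦ p.eq_zero_of_isOfFinAddOrder ((tmul_one_eq_zero_iff_isOfFinAddOrder h).mp hh)) hε
    (fun h hh ↦ hbound h (mt (tmul_one_eq_zero_iff_isOfFinAddOrder h).mpr hh))

/-- Let `H` be an abelian group of finite torsion-free rank `n = dim_ℚ (ℚ ⊗[ℤ] H)`, and let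
`ℓ : H → ℝ` be nonnegative, homogeneous and subadditive. If `ℓ` is bounded below by some
`ε > 0` on elements of infinite order, then the image of the natural map
`p : H → ℚ ⊗[ℤ] H`, `h ↦ 1 ⊗ h`, is free abelian of rank `n`, i.e. `p(H) ≅ ℤ^n`. -/
theorem image_in_rationalization_is_free
    {H : Type*} [AddCommGroup H]
    [FiniteDimensional ℚ (ℚ ⊗[ℤ] H)]
    (n : ℕ) (hn : n = Module.finrank ℚ (ℚ ⊗[ℤ] H))
    (ℓ : H → ℝ)
    (hnn : ∀ h : H, 0 ≤ ℓ h)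
    (hhom : ∀ (h : H) (m : ℤ), ℓ (m • h) = |(m : ℝ)| * ℓ h)
    (hsub : ∀ g h : H, ℓ (g + h) ≤ ℓ g + ℓ h)
    (ε : ℝ) (hε : 0 < ε)
    (hbound : ∀ h : H, ¬ IsOfFinAddOrder h → ε ≤ ℓ h) :
    Nonempty ((TensorProduct.mk ℤ ℚ H 1).toAddMonoidHom.range ≃+ (Fin n → ℤ)) :=
  image_in_rationalization_is_free_general n hn ℓ hhom hsub ε hε hbound
end

section
/- Let H be an abelian group whose torsion-free rank dim_ℚ(H ⊗ ℚ) is finite and whose torsion subgroup is finite, and let ℓ : H → ℝ be a nonnegative function satisfying ℓ(h^m) = |m|·ℓ(h) for all h ∈ H and m ∈ ℤ, and ℓ(gh) ≤ ℓ(g) + ℓ(h) for all g, h ∈ H. Suppose there exists ε > 0 such that ℓ(h) ≥ ε for every element h ∈ H of infinite order. Then H is finitely generated. -/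
/-!
The map `p : H → ℚ ⊗ H`, `h ↦ 1 ⊗ h`, has the torsion subgroup as kernel, and `ℚ ⊗ H` has a
finite `ℚ`-basis `p e₁, …, p eₙ` taken from the image of `H`. For `h ∈ H`, clearing the
denominators of the coordinates `aᵢ` of `p h` gives `b ≠ 0` with `b • h - ∑ (b aᵢ) • eᵢ` torsion,
so homogeneity and subadditivity yield `ℓ h ≤ C ‖a‖` with `C = ∑ ℓ eᵢ`. Hence the coordinate map
`H → ℝⁿ` sends every element of infinite order to a vector of norm at least `ε / C`: its image
is a discrete subgroup of `ℝⁿ`, hence finitely generated, and its kernel is the finite torsion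
subgroup.
-/

open scoped TensorProduct nonZeroDivisors
open Module Submodule

structure IsTranslationLength {H : Type*} [AddCommGroup H] (ℓ : H → ℝ) : Prop where
  nonneg : ∀ h, 0 ≤ ℓ h
  zsmul_eq : ∀ (h : H) (m : ℤ), ℓ (m • h) = |(m : ℝ)| * ℓ h
  add_le : ∀ g h, ℓ (g + h) ≤ ℓ g + ℓ h

namespace IsTranslationLength

variable {H : Type*} [AddCommGroup H] {ℓ : H → ℝ}

theorem map_zero (hℓ : IsTranslationLength ℓ) : ℓ 0 = 0 := by
  simpa using hℓ.zsmul_eq 0 0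

theorem eq_zero_of_isOfFinAddOrder (hℓ : IsTranslationLength ℓ) {h : H}
    (hh : IsOfFinAddOrder h) : ℓ h = 0 := by
  obtain ⟨n, hn, hnh⟩ := isOfFinAddOrder_iff_zsmul_eq_zero.mp hh
  have := hℓ.zsmul_eq h n
  rw [hnh, hℓ.map_zero] at this
  simpa [hn] using this.symm

theorem le_sum_mul_norm_repr (hℓ : IsTranslationLength ℓ) {ι V : Type*} [Fintype ι]
    [AddCommGroup V] [Module ℚ V] (p : H →+ V) (hp : ∀ h, p h = 0 → IsOfFinAddOrder h)
    (B : Basis ι ℚ V) (e : ι → H) (he : ∀ i, p (e i) = B i) (h : H) :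
    ℓ h ≤ (∑ i, ℓ (e i)) * ‖fun i ↦ (B.repr (p h) i : ℝ)‖ := by
  set a := B.repr (p h)
  obtain ⟨b, hb⟩ := IsLocalization.exist_integer_multiples_of_finite ℤ⁰ (fun i ↦ a i)
  choose k hk using hb
  have hkb : ∀ i, (k i : ℚ) = (b : ℤ) * a i := by simpa using hk
  have hrel : p ((b : ℤ) • h - ∑ i, k i • e i) = 0 := by
    rw [map_sub, map_zsmul, map_sum, ← B.sum_repr (p h), Finset.smul_sum, sub_eq_zero]
    refine Finset.sum_congr rfl fun i _ ↦ ?_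
    rw [map_zsmul, he, ← Int.cast_smul_eq_zsmul ℚ, ← Int.cast_smul_eq_zsmul ℚ, smul_smul, hkb]
  have hb0 : (0 : ℝ) < |((b : ℤ) : ℝ)| := by simp [nonZeroDivisors.coe_ne_zero b]
  refine le_of_mul_le_mul_left ?_ hb0
  calc |((b : ℤ) : ℝ)| * ℓ h = ℓ ((b : ℤ) • h) := (hℓ.zsmul_eq h b).symm
    _ ≤ ℓ (∑ i, k i • e i) + ℓ ((b : ℤ) • h - ∑ i, k i • e i) := by
      simpa using hℓ.add_le (∑ i, k i • e i) ((b : ℤ) • h - ∑ i, k i • e i)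
    _ = ℓ (∑ i, k i • e i) := by rw [hℓ.eq_zero_of_isOfFinAddOrder (hp _ hrel), add_zero]
    _ ≤ ∑ i, ℓ (k i • e i) := Finset.le_sum_of_subadditive ℓ hℓ.map_zero.le hℓ.add_le _ _
    _ = ∑ i, |((b : ℤ) : ℝ)| * |(a i : ℝ)| * ℓ (e i) := by
      refine Finset.sum_congr rfl fun i _ ↦ ?_
      rw [hℓ.zsmul_eq, ← abs_mul]
      congr 2
      exact_mod_cast hkb i
    _ ≤ ∑ i, |((b : ℤ) : ℝ)| * ‖fun i ↦ (a i : ℝ)‖ * ℓ (e i) := by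
      gcongr with i
      · exact hℓ.nonneg _
      · exact norm_le_pi_norm (fun i ↦ (a i : ℝ)) i
    _ = |((b : ℤ) : ℝ)| * ((∑ i, ℓ (e i)) * ‖fun i ↦ (a i : ℝ)‖) := by
      rw [← Finset.mul_sum]; ring

end IsTranslationLength

theorem IsLocalizedModule.eq_zero_iff_isOfFinAddOrder {M M' : Type*} [AddCommGroup M]
    [AddCommGroup M'] [Module ℤ M'] (f : M →ₗ[ℤ] M') [IsLocalizedModule ℤ⁰ f] {m : M} :
    f m = 0 ↔ IsOfFinAddOrder m := by
  rw [IsLocalizedModule.eq_zero_iff ℤ⁰ f, isOfFinAddOrder_iff_zsmul_eq_zero]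
  simp [mem_nonZeroDivisors_iff_ne_zero]

theorem IsLocalizedModule.span_range_eq_top {R : Type*} (S : Type*) {M N : Type*} [CommSemiring R]
    [CommSemiring S] [AddCommMonoid M] [AddCommMonoid N] [Module R M] [Module R N] [Algebra R S]
    [Module S N] [IsScalarTower R S N] (p : Submonoid R) [IsLocalization p S] (f : M →ₗ[R] N)
    [IsLocalizedModule p f] : span S (Set.range f) = ⊤ := by
  rw [← localized'_top S p f, localized'_eq_span, top_coe, Set.image_univ]

theorem AddGroup.fg_of_finite_ker_of_le_norm {H E : Type*} [AddCommGroup H] [NormedAddCommGroup E]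
    [NormedSpace ℝ E] [FiniteDimensional ℝ E] (φ : H →+ E) (hker : (φ.ker : Set H).Finite)
    {r : ℝ} (hr : 0 < r) (hφ : ∀ h, φ h ≠ 0 → r ≤ ‖φ h‖) : AddGroup.FG H := by
  let f := φ.toIntLinearMap
  have : DiscreteTopology (LinearMap.range f) := .of_forall_le_norm hr <| by
    rintro ⟨_, h, rfl⟩ hne
    exact hφ h fun h0 ↦ hne (Subtype.ext h0)
  have : Finite (LinearMap.ker f) := hker
  have : Module.Finite ℤ (H ⧸ LinearMap.ker f) := Module.Finite.equiv f.quotKerEquivRange.symm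
  exact Module.Finite.iff_addGroup_fg.mp (.of_submodule_quotient (LinearMap.ker f))

/-- Let `H` be an abelian group of finite torsion-free rank (`dim_ℚ (ℚ ⊗[ℤ] H) < ∞`) whose
torsion subgroup is finite, and let `ℓ : H → ℝ` be nonnegative, homogeneous and subadditive.
If `ℓ` is bounded below by some `ε > 0` on elements of infinite order, then `H` is
finitely generated. -/
theorem fg_of_translation_length_function
    {H : Type*} [AddCommGroup H]
    [FiniteDimensional ℚ (ℚ ⊗[ℤ] H)]
    (htors : {h : H | IsOfFinAddOrder h}.Finite)
    (ℓ : H → ℝ)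
    (hnn : ∀ h : H, 0 ≤ ℓ h)
    (hhom : ∀ (h : H) (m : ℤ), ℓ (m • h) = |(m : ℝ)| * ℓ h)
    (hsub : ∀ g h : H, ℓ (g + h) ≤ ℓ g + ℓ h)
    (ε : ℝ) (hε : 0 < ε)
    (hbound : ∀ h : H, ¬ IsOfFinAddOrder h → ε ≤ ℓ h) :
    AddGroup.FG H := by
  have hℓ : IsTranslationLength ℓ := ⟨hnn, hhom, hsub⟩
  let p := TensorProduct.mk ℤ ℚ H 1
  have hp (h : H) : p h = 0 ↔ IsOfFinAddOrder h := IsLocalizedModule.eq_zero_iff_isOfFinAddOrder p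
  have hspan := (IsLocalizedModule.span_range_eq_top ℚ ℤ⁰ p).ge
  let B := Basis.ofSpan hspan
  let : Fintype _ := @Fintype.ofFinite _ (Module.Finite.finite_basis B)
  choose e he using fun i ↦ Basis.ofSpan_subset hspan ⟨i, rfl⟩
  let φ : H →+ (_ → ℝ) := AddMonoidHom.mk' (fun h i ↦ (B.repr (p h) i : ℝ)) fun g h ↦ by
    ext; simp
  have hφ (h : H) : φ h = 0 ↔ IsOfFinAddOrder h := by
    rw [← hp, ← B.repr.map_eq_zero_iff, Finsupp.ext_iff]
    simp [φ, funext_iff]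
  set C := ∑ i, ℓ (e i)
  have hC : 0 < C + 1 := by linarith [Finset.sum_nonneg fun i (_ : i ∈ Finset.univ) ↦ hnn (e i)]
  refine AddGroup.fg_of_finite_ker_of_le_norm φ (htors.subset fun h ↦ (hφ h).mp)
    (div_pos hε hC) fun h hh ↦ ?_
  have hle : ℓ h ≤ C * ‖φ h‖ :=
    hℓ.le_sum_mul_norm_repr p.toAddMonoidHom (fun h ↦ (hp h).mp) B e he h
  rw [div_le_iff₀ hC]
  nlinarith [hbound h (mt (hφ h).mpr hh), norm_nonneg (φ h)]
end
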